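/- Let Z be the lazy walk on ℤ with parameter γ started at z' ∈ I = [z_0 − d, z_0 + d], let Ĩ = (z_0 − h, z_0 + h) with 20(d+1) < h, and T the exit time of Ĩ. Then for all z, z' ∈ I, E_{z'}[L^z_T] = γ^{−1}·h·(1 + φ(z', z)) with |φ(z', z)| ≤ c·d/h for a constant c depending only on γ. -/

import Mathlib

open MeasureTheory ProbabilityTheory
open scoped ENNReal NNReal

/-- The step distribution of the lazy random walk on `ℤ` with parameter `γ`. -/
noncomputable def lazyStep (γ : ℝ) : Measure ℤ :=
  ENNReal.ofReal (γ / 2) • Measure.dirac 1 + ENNReal.ofReal (γ / 2) • Measure.dirac (-1)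
    + ENNReal.ofReal (1 - γ) • Measure.dirac 0

/-- The random walk started at `z` with increments `ξ`. -/
def walk {Ω : Type} (ξ : ℕ → Ω → ℤ) (z : ℤ) (n : ℕ) (ω : Ω) : ℤ :=
  z + ∑ m ∈ Finset.range n, ξ m ω

/-- The exit time from the set `I` of the walk started at `z`. -/
noncomputable def exitTime {Ω : Type} (ξ : ℕ → Ω → ℤ) (z : ℤ) (I : Set ℤ) (ω : Ω) : ℕ∞ :=
  ⨅ (n : ℕ) (_ : walk ξ z n ω ∉ I), (n : ℕ∞)

/-- The local time at `z` of the walk started at `z₀`, before the random time `τ`. -/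
noncomputable def localTime {Ω : Type} (ξ : ℕ → Ω → ℤ) (z₀ z : ℤ) (τ : Ω → ℕ∞)
    (ω : Ω) : ℝ≥0∞ :=
  ∑' n : ℕ, if (n : ℕ∞) < τ ω ∧ walk ξ z₀ n ω = z then (1 : ℝ≥0∞) else 0

/-!
`G = greenFn γ a b z` vanishes at `a` and `b`, and inside `(a, b)` the lazy averaging operator maps
it to `G - 𝟙_z`. Writing `f_n(x)` for the probability that the walk from `z'` is at `x` at time `n`
without having left `(a, b)`, `f_{n+1}` is the lazy average of `f_n`; since the kernel is
symmetric, summation by parts gives `∑ₓ f_{n+1} G = ∑ₓ f_n G - f_n(z)`, hence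
`∑_{n<N} f_n(z) = G(z') - ∑ₓ f_N G`. From any point of `(a, b)`, `b - a` consecutive up-steps leave
the interval, so survival decays geometrically, the remainder vanishes, and `E_{z'}[L^z_T] = G(z')`.
For `a, b = z₀ ∓ h` and `z, z'` within `d` of `z₀`, `G(z') = γ⁻¹ (h + p) (h - q) / h` with
`|p|, |q| ≤ d`, which is `γ⁻¹ h (1 + O(d/h))`.
-/

open Finset Filter Topology

noncomputable def lazyAvg (γ : ℝ) (u : ℤ → ℝ) (y : ℤ) : ℝ :=
  γ / 2 * u (y - 1) + γ / 2 * u (y + 1) + (1 - γ) * u y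

/-- Green's function of the lazy walk killed on leaving `Set.Ioo a b`, with pole at `z`. -/
noncomputable def greenFn (γ : ℝ) (a b z x : ℤ) : ℝ :=
  2 / γ * ((min (x : ℝ) z - a) * (b - max (x : ℝ) z)) / (b - a)

section Green

variable {γ : ℝ} {a b z : ℤ}

lemma greenFn_left (hz : a ≤ z) : greenFn γ a b z a = 0 := by
  simp [greenFn, hz]

lemma greenFn_right (hz : z ≤ b) : greenFn γ a b z b = 0 := by
  simp [greenFn, hz]

lemma greenFn_factors_mem_Icc (hz : z ∈ Set.Icc a b) {x : ℤ} (hx : x ∈ Set.Icc a b) :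
    min (x : ℝ) z - a ∈ Set.Icc (0 : ℝ) (b - a) ∧ b - max (x : ℝ) z ∈ Set.Icc (0 : ℝ) (b - a) := by
  obtain ⟨haz, hzb⟩ : (a : ℝ) ≤ z ∧ (z : ℝ) ≤ b := by exact_mod_cast hz
  obtain ⟨hax, hxb⟩ : (a : ℝ) ≤ x ∧ (x : ℝ) ≤ b := by exact_mod_cast hx
  refine ⟨⟨?_, ?_⟩, ?_, ?_⟩
  · linarith [le_min hax haz]
  · linarith [min_le_right (x : ℝ) z]
  · linarith [max_le hxb hzb]
  · linarith [le_max_right (x : ℝ) z]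

lemma greenFn_nonneg (hγ : 0 < γ) (hz : z ∈ Set.Icc a b) {x : ℤ} (hx : x ∈ Set.Icc a b) :
    0 ≤ greenFn γ a b z x := by
  obtain ⟨⟨h₁, h₁'⟩, h₂, -⟩ := greenFn_factors_mem_Icc hz hx
  have hab := h₁.trans h₁'
  unfold greenFn
  positivity

lemma greenFn_le (hγ : 0 < γ) (hz : z ∈ Set.Icc a b) {x : ℤ} (hx : x ∈ Set.Icc a b) :
    greenFn γ a b z x ≤ 2 / γ * (b - a) := by
  obtain ⟨⟨h₁, h₁'⟩, h₂, h₂'⟩ := greenFn_factors_mem_Icc hz hx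
  rcases (h₁.trans h₁').eq_or_lt with hab | hab
  · simp [greenFn, ← hab]
  rw [greenFn, div_le_iff₀ hab, mul_assoc]
  gcongr

lemma lazyAvg_greenFn (hγ : γ ≠ 0) {y : ℤ} (hy : y ∈ Set.Ioo a b) :
    lazyAvg γ (greenFn γ a b z) y = greenFn γ a b z y - if y = z then 1 else 0 := by
  have hab : (b - a : ℝ) ≠ 0 := sub_ne_zero.2 (by exact_mod_cast (hy.1.trans hy.2).ne')
  simp only [lazyAvg, greenFn, ← Int.cast_min, ← Int.cast_max]
  rcases lt_trichotomy y z with h | rfl | h <;>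
    simp (disch := omega) only [min_eq_left, min_eq_right, max_eq_left, max_eq_right, if_neg] <;>
    push_cast <;> field_simp <;> ring

end Green

section SummationByParts

variable {γ : ℝ} {a b : ℤ} {u : ℤ → ℝ}

lemma sum_Icc_comp_sub_mul (hu : ∀ x ∉ Set.Ioo a b, u x = 0) (w : ℤ → ℝ) {s : ℤ}
    (hs : |s| ≤ 1) :
    ∑ x ∈ Icc a b, u (x - s) * w x = ∑ x ∈ Icc a b, u x * w (x + s) := by
  obtain ⟨hs₁, hs₂⟩ := abs_le.1 hs
  have hinner : ∀ c : ℤ, |c| ≤ 1 → Icc (a + 1 + c) (b - 1 + c) ⊆ Icc a b := fun c hc x hx => by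
    rw [abs_le] at hc
    simp only [mem_Icc] at hx ⊢
    omega
  calc ∑ x ∈ Icc a b, u (x - s) * w x
        = ∑ x ∈ Icc (a + 1 + s) (b - 1 + s), u (x - s) * w x := by
        refine (sum_subset (hinner s hs) fun x hx hx' => ?_).symm
        simp only [mem_Icc] at hx hx'
        rw [hu (x - s) (by simp only [Set.mem_Ioo]; omega), zero_mul]
    _ = ∑ x ∈ Icc (a + 1) (b - 1), u x * w (x + s) := by
        rw [← map_add_right_Icc, sum_map]
        simp
    _ = ∑ x ∈ Icc a b, u x * w (x + s) := by
        refine sum_subset (by simpa using hinner 0 (by simp)) fun x hx hx' => ?_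
        simp only [mem_Icc] at hx hx'
        rw [hu x (by simp only [Set.mem_Ioo]; omega), zero_mul]

lemma sum_lazyAvg_mul (hu : ∀ x ∉ Set.Ioo a b, u x = 0) (w : ℤ → ℝ) :
    ∑ x ∈ Icc a b, lazyAvg γ u x * w x = ∑ x ∈ Icc a b, u x * lazyAvg γ w x := by
  have hright := sum_Icc_comp_sub_mul hu w (s := 1) (by simp)
  have hleft := sum_Icc_comp_sub_mul hu w (s := -1) (by simp)
  simp only [sub_neg_eq_add, ← sub_eq_add_neg] at hleft
  simp only [lazyAvg, add_mul, mul_add, sum_add_distrib, mul_assoc, ← mul_sum, hright, hleft]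
  simp only [mul_sum, mul_left_comm (u _)]
  ring

variable {z : ℤ}

lemma sum_mul_greenFn_of_eq_lazyAvg (hγ : γ ≠ 0) (hz : z ∈ Set.Ioo a b)
    (hu : ∀ x ∉ Set.Ioo a b, u x = 0) {v : ℤ → ℝ} (hv : ∀ y ∈ Set.Ioo a b, v y = lazyAvg γ u y) :
    ∑ x ∈ Icc a b, v x * greenFn γ a b z x = ∑ x ∈ Icc a b, u x * greenFn γ a b z x - u z := by
  have hboundary : ∀ x ∈ Icc a b, x ∉ Set.Ioo a b → greenFn γ a b z x = 0 := fun x hx hx' => by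
    simp only [mem_Icc, Set.mem_Ioo] at hx hx'
    obtain rfl | rfl : x = a ∨ x = b := by omega
    · exact greenFn_left hz.1.le
    · exact greenFn_right hz.2.le
  calc ∑ x ∈ Icc a b, v x * greenFn γ a b z x
      = ∑ x ∈ Icc a b, lazyAvg γ u x * greenFn γ a b z x := sum_congr rfl fun x hx => by
        by_cases hx' : x ∈ Set.Ioo a b
        · rw [hv x hx']
        · simp only [hboundary x hx hx', mul_zero]
    _ = ∑ x ∈ Icc a b, u x * lazyAvg γ (greenFn γ a b z) x := sum_lazyAvg_mul hu _
    _ = ∑ x ∈ Icc a b, (u x * greenFn γ a b z x - if x = z then u x else 0) :=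
        sum_congr rfl fun x _ => by
          by_cases hx' : x ∈ Set.Ioo a b
          · rw [lazyAvg_greenFn hγ hx']
            split_ifs <;> ring
          · have hxz : x ≠ z := fun h => hx' (h ▸ hz)
            simp [hu x hx', hxz]
    _ = _ := by
        rw [sum_sub_distrib, sum_ite_eq' _ _ u, if_pos (mem_Icc.2 (Set.Ioo_subset_Icc_self hz))]

lemma sum_range_eq_greenFn_sub (hγ : γ ≠ 0) (hz : z ∈ Set.Ioo a b) {z' : ℤ}
    (hz' : z' ∈ Set.Icc a b) {f : ℕ → ℤ → ℝ} (hf₀ : ∀ x, f 0 x = if x = z' then 1 else 0)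
    (hf : ∀ n, ∀ x ∉ Set.Ioo a b, f n x = 0)
    (hf_succ : ∀ n, ∀ y ∈ Set.Ioo a b, f (n + 1) y = lazyAvg γ (f n) y) (N : ℕ) :
    ∑ n ∈ range N, f n z
      = greenFn γ a b z z' - ∑ x ∈ Icc a b, f N x * greenFn γ a b z x := by
  induction N with
  | zero =>
    simp only [range_zero, sum_empty, hf₀, ite_mul, one_mul, zero_mul]
    rw [sum_ite_eq' _ _ (greenFn γ a b z), if_pos (mem_Icc.2 hz'), sub_self]
  | succ N ih =>
    rw [sum_range_succ, ih, sum_mul_greenFn_of_eq_lazyAvg hγ hz (hf N) (hf_succ N)]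
    ring

end SummationByParts

lemma exists_greenFn_eq_mul_one_add {γ : ℝ} (hγ : γ ≠ 0) {z₀ d h z z' : ℤ} (hdh : d < h)
    (hz : z ∈ Set.Icc (z₀ - d) (z₀ + d)) (hz' : z' ∈ Set.Icc (z₀ - d) (z₀ + d)) :
    ∃ φ : ℝ, |φ| ≤ 3 * (d : ℝ) / h ∧
      greenFn γ (z₀ - h) (z₀ + h) z z' = γ⁻¹ * h * (1 + φ) := by
  obtain ⟨hz₁, hz₂⟩ : (z₀ : ℝ) - d ≤ z ∧ (z : ℝ) ≤ z₀ + d := by exact_mod_cast hz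
  obtain ⟨hz'₁, hz'₂⟩ : (z₀ : ℝ) - d ≤ z' ∧ (z' : ℝ) ≤ z₀ + d := by exact_mod_cast hz'
  have hdh' : (d : ℝ) < h := by exact_mod_cast hdh
  have hd : (0 : ℝ) ≤ d := by linarith
  have hh : (0 : ℝ) < h := by linarith
  set p : ℝ := min (z' : ℝ) z - z₀
  set q : ℝ := max (z' : ℝ) z - z₀
  have hp : |p| ≤ d :=
    abs_le.2 ⟨by linarith [le_min hz'₁ hz₁], by linarith [min_le_left (z' : ℝ) z]⟩
  have hq : |q| ≤ d :=
    abs_le.2 ⟨by linarith [le_max_left (z' : ℝ) z], by linarith [max_le hz'₂ hz₂]⟩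
  have hdefect : |(h + p) * (h - q) - h * h| ≤ 3 * d * h := calc
    |(h + p) * (h - q) - h * h| = |h * (p - q) - p * q| := by ring_nf
    _ ≤ |h * (p - q)| + |p * q| := abs_sub _ _
    _ ≤ h * (2 * d) + d * h := by
        rw [abs_mul, abs_mul, abs_of_pos hh]
        gcongr
        · exact (abs_sub p q).trans (by linarith)
        · exact hq.trans hdh'.le
    _ = 3 * d * h := by ring
  refine ⟨((h + p) * (h - q) - h * h) / (h * h), ?_, ?_⟩
  · rw [abs_div, abs_of_pos (mul_pos hh hh), div_le_div_iff₀ (mul_pos hh hh) hh]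
    nlinarith
  · have hh₀ : (h : ℝ) ≠ 0 := hh.ne'
    simp only [greenFn, p, q]
    push_cast
    rw [show (z₀ + h : ℝ) - (z₀ - h) = 2 * h by ring]
    field_simp
    ring

lemma tendsto_zero_of_antitone_of_le_mul {u : ℕ → ℝ} (hu : Antitone u) (hu₀ : ∀ n, 0 ≤ u n)
    {K : ℕ} (hK : K ≠ 0) {ρ : ℝ} (hρ₀ : 0 ≤ ρ) (hρ₁ : ρ < 1) (hKρ : ∀ n, u (n + K) ≤ ρ * u n) :
    Tendsto u atTop (𝓝 0) := by
  have hblock : ∀ j, u (K * j) ≤ ρ ^ j * u 0 := fun j => by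
    induction j with
    | zero => simp
    | succ j ih =>
      calc u (K * (j + 1)) = u (K * j + K) := by ring_nf
        _ ≤ ρ * u (K * j) := hKρ _
        _ ≤ ρ * (ρ ^ j * u 0) := by gcongr
        _ = ρ ^ (j + 1) * u 0 := by ring
  refine squeeze_zero hu₀ (fun n => (hu (Nat.mul_div_le n K)).trans (hblock (n / K))) ?_
  simpa using ((tendsto_pow_atTop_nhds_zero_of_lt_one hρ₀ hρ₁).comp
    (Nat.tendsto_div_const_atTop hK)).mul_const (u 0)

section Walk

variable {Ω : Type} {ξ : ℕ → Ω → ℤ} {z : ℤ} {S : Set ℤ}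

@[simp]
lemma walk_zero (ξ : ℕ → Ω → ℤ) (z : ℤ) : walk ξ z 0 = fun _ => z := by
  ext; simp [walk]

lemma walk_succ (ξ : ℕ → Ω → ℤ) (z : ℤ) (n : ℕ) (ω : Ω) :
    walk ξ z (n + 1) ω = walk ξ z n ω + ξ n ω := by
  simp [walk, sum_range_succ, add_assoc]

lemma walk_add_of_forall_eq_one {n j : ℕ} {ω : Ω} (h : ∀ k ∈ Ico n (n + j), ξ k ω = 1) :
    walk ξ z (n + j) ω = walk ξ z n ω + j := by
  induction j with
  | zero => simp
  | succ j ih =>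
    rw [← add_assoc, walk_succ, ih fun k hk => h k (Ico_subset_Ico_right (by omega) hk),
      h (n + j) (by simp)]
    push_cast
    ring

def stayedIn (ξ : ℕ → Ω → ℤ) (z : ℤ) (S : Set ℤ) (n : ℕ) : Set Ω :=
  {ω | ∀ m ≤ n, walk ξ z m ω ∈ S}

def stayedInAt (ξ : ℕ → Ω → ℤ) (z : ℤ) (S : Set ℤ) (n : ℕ) (x : ℤ) : Set Ω :=
  stayedIn ξ z S n ∩ walk ξ z n ⁻¹' {x}

lemma stayedIn_anti : Antitone (stayedIn ξ z S) :=
  fun _ _ hmn _ hω m hm => hω m (hm.trans hmn)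

lemma lt_exitTime_iff {n : ℕ} {ω : Ω} : (n : ℕ∞) < exitTime ξ z S ω ↔ ω ∈ stayedIn ξ z S n := by
  refine ⟨fun h m hm => ?_, fun h => ?_⟩
  · by_contra hm'
    have : (n : ℕ∞) < m := h.trans_le (iInf₂_le m hm')
    exact (Nat.cast_lt.1 this).not_ge hm
  · refine (Nat.cast_lt.2 n.lt_succ_self).trans_le (le_iInf₂ fun k hk => Nat.cast_le.2 ?_)
    by_contra hk'
    exact hk (h k (by omega))

lemma stayedInAt_eq_empty {n : ℕ} {x : ℤ} (hx : x ∉ S) : stayedInAt ξ z S n x = ∅ :=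
  Set.eq_empty_of_forall_notMem fun _ hω => hx (hω.2 ▸ hω.1 n le_rfl)

lemma stayedInAt_zero (hz : z ∈ S) (x : ℤ) :
    stayedInAt ξ z S 0 x = if x = z then Set.univ else ∅ := by
  ext ω
  split_ifs with hx
  · simp [stayedInAt, stayedIn, hx, hz]
  · simp [stayedInAt, stayedIn, Ne.symm hx]

lemma stayedInAt_succ {n : ℕ} {y : ℤ} (hy : y ∈ S) :
    stayedInAt ξ z S (n + 1) y = ⋃ s : ℤ, stayedInAt ξ z S n (y - s) ∩ ξ n ⁻¹' {s} := by
  ext ω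
  simp only [stayedInAt, stayedIn, Set.mem_iUnion, Set.mem_inter_iff, Set.mem_ofPred_eq,
    Set.mem_preimage, Set.mem_singleton_iff, walk_succ]
  constructor
  · rintro ⟨hstay, hend⟩
    exact ⟨ξ n ω, ⟨fun m hm => hstay m (by omega), by omega⟩, rfl⟩
  · rintro ⟨s, ⟨hstay, hend⟩, rfl⟩
    refine ⟨fun m hm => ?_, by omega⟩
    rcases Nat.lt_or_eq_of_le hm with hm | rfl
    · exact hstay m (by omega)
    · rwa [walk_succ, hend, sub_add_cancel]

lemma stayedIn_add_subset {a b : ℤ} {n K : ℕ} (hK : b - a ≤ K) :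
    stayedIn ξ z (Set.Ioo a b) (n + K) ⊆ (⋂ k ∈ Ico n (n + K), ξ k ⁻¹' {1})ᶜ := by
  intro ω hω hones
  simp only [Set.mem_iInter, Set.mem_preimage, Set.mem_singleton_iff] at hones
  obtain ⟨ha, hb⟩ := hω n (by omega)
  set j := (b - walk ξ z n ω).toNat
  have hj : (j : ℤ) = b - walk ξ z n ω := Int.toNat_of_nonneg (by omega)
  have hjK : j ≤ K := by omega
  have hreach := walk_add_of_forall_eq_one (z := z) (j := j) fun k hk =>
    hones k (Ico_subset_Ico_right (by omega) hk)
  exact (hω (n + j) (by omega)).2.ne (by omega)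

abbrev pastIncrements (ξ : ℕ → Ω → ℤ) (n : ℕ) : MeasurableSpace Ω :=
  MeasurableSpace.comap (fun ω (i : range n) => ξ i ω) inferInstance

lemma measurable_walk_pastIncrements {m n : ℕ} (hmn : m ≤ n) (z : ℤ) :
    Measurable[pastIncrements ξ n] (walk ξ z m) :=
  measurable_const.add <| Finset.measurable_sum _ fun i hi =>
    (measurable_pi_apply (⟨i, mem_range.2 ((mem_range.1 hi).trans_le hmn)⟩ : range n)).comp
      (comap_measurable (fun ω (i : range n) => ξ i ω))

lemma measurableSet_stayedIn_pastIncrements (n : ℕ) :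
    MeasurableSet[pastIncrements ξ n] (stayedIn ξ z S n) := by
  simp only [stayedIn, Set.ofPred_forall]
  exact MeasurableSet.iInter fun m => MeasurableSet.iInter fun hm =>
    measurable_walk_pastIncrements hm z .of_discrete

lemma measurableSet_stayedInAt_pastIncrements (n : ℕ) (x : ℤ) :
    MeasurableSet[pastIncrements ξ n] (stayedInAt ξ z S n x) :=
  (measurableSet_stayedIn_pastIncrements n).inter
    (measurable_walk_pastIncrements le_rfl z (measurableSet_singleton x))

end Walk

section Measure

variable {Ω : Type} [MeasurableSpace Ω] {P : Measure Ω} {ξ : ℕ → Ω → ℤ} {γ : ℝ} {z : ℤ}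
  {S : Set ℤ}

lemma pastIncrements_le (hξ : ∀ n, Measurable (ξ n)) (n : ℕ) :
    pastIncrements ξ n ≤ ‹MeasurableSpace Ω› :=
  (measurable_pi_lambda (fun ω (i : range n) => ξ i ω) fun i => hξ i).comap_le

lemma measure_inter_iInter_preimage_eq_mul (hξ : ∀ n, Measurable (ξ n)) (hindep : iIndepFun ξ P)
    {n : ℕ} {E : Set Ω} (hE : MeasurableSet[pastIncrements ξ n] E) {K : Finset ℕ}
    (hK : ∀ k ∈ K, n ≤ k) (t : ℕ → Set ℤ) :
    P (E ∩ ⋂ k ∈ K, ξ k ⁻¹' t k) = P E * ∏ k ∈ K, P (ξ k ⁻¹' t k) := by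
  obtain ⟨B, -, rfl⟩ := MeasurableSpace.measurableSet_comap.1 hE
  have hdisj : Disjoint (range n) K := disjoint_left.2 fun i hi hiK => by
    have := hK i hiK
    simp only [mem_range] at hi
    omega
  have hfuture : ⋂ k ∈ K, ξ k ⁻¹' t k = (fun ω (k : K) => ξ k ω) ⁻¹' {w | ∀ k : K, w k ∈ t k} := by
    ext; simp
  rw [hfuture, (hindep.indepFun_finset _ _ hdisj hξ).measure_inter_preimage_eq_mul _ _
    .of_discrete .of_discrete, ← hfuture, hindep.measure_inter_preimage_eq_mul K
    fun _ _ => .of_discrete]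

lemma measure_preimage_eq_lazyStep (hξ : ∀ n, Measurable (ξ n))
    (hlaw : ∀ n, P.map (ξ n) = lazyStep γ) (n : ℕ) (s : Set ℤ) :
    P (ξ n ⁻¹' s) = lazyStep γ s := by
  rw [← Measure.map_apply (hξ n) .of_discrete, hlaw n]

lemma lintegral_lazyStep (F : ℤ → ℝ≥0∞) :
    ∫⁻ s, F s ∂lazyStep γ = ENNReal.ofReal (γ / 2) * F 1 + ENNReal.ofReal (γ / 2) * F (-1)
      + ENNReal.ofReal (1 - γ) * F 0 := by
  simp [lazyStep, lintegral_add_measure]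

lemma lazyStep_singleton_one : lazyStep γ {1} = ENNReal.ofReal (γ / 2) := by
  simp [lazyStep]

lemma sum_measure_stayedInAt_le (hξ : ∀ n, Measurable (ξ n)) (n : ℕ) (T : Finset ℤ) :
    ∑ x ∈ T, P (stayedInAt ξ z S n x) ≤ P (stayedIn ξ z S n) := by
  rw [← measure_biUnion_finset (fun x _ y _ hxy => Set.disjoint_left.2 fun ω h₁ h₂ =>
    hxy (h₁.2.symm.trans h₂.2)) fun x _ =>
      pastIncrements_le hξ n _ (measurableSet_stayedInAt_pastIncrements n x)]
  exact measure_mono (Set.iUnion₂_subset fun _ _ => Set.inter_subset_left)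

lemma lintegral_localTime_eq_tsum (hξ : ∀ n, Measurable (ξ n)) (z' : ℤ) :
    ∫⁻ ω, localTime ξ z' z (exitTime ξ z' S) ω ∂P = ∑' n, P (stayedInAt ξ z' S n z) := by
  have hmeas : ∀ n, MeasurableSet (stayedInAt ξ z' S n z) := fun n =>
    pastIncrements_le hξ n _ (measurableSet_stayedInAt_pastIncrements n z)
  have hindicator : ∀ ω, localTime ξ z' z (exitTime ξ z' S) ω
      = ∑' n, (stayedInAt ξ z' S n z).indicator 1 ω := fun ω => by
    classical
    simp only [localTime, Set.indicator_apply, lt_exitTime_iff, stayedInAt, Set.mem_inter_iff,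
      Set.mem_preimage, Set.mem_singleton_iff, Pi.one_apply]
  rw [lintegral_congr hindicator,
    lintegral_tsum fun n => (measurable_one.indicator (hmeas n)).aemeasurable]
  simp [lintegral_indicator_one (hmeas _)]

end Measure

section KilledWalk

variable {Ω : Type} [MeasurableSpace Ω] {P : Measure Ω} {ξ : ℕ → Ω → ℤ} {γ : ℝ} {z : ℤ}
  {S : Set ℤ}

lemma measure_stayedInAt_succ (hξ : ∀ n, Measurable (ξ n)) (hindep : iIndepFun ξ P)
    (hlaw : ∀ n, P.map (ξ n) = lazyStep γ) (n : ℕ) {y : ℤ} (hy : y ∈ S) :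
    P (stayedInAt ξ z S (n + 1) y) = ∫⁻ s, P (stayedInAt ξ z S n (y - s)) ∂lazyStep γ := by
  rw [stayedInAt_succ hy, measure_iUnion, lintegral_countable']
  · congr 1
    ext s
    simpa [measure_preimage_eq_lazyStep hξ hlaw] using measure_inter_iInter_preimage_eq_mul hξ
      hindep (measurableSet_stayedInAt_pastIncrements n (y - s)) (K := {n}) (by simp)
      fun _ => {s}
  · exact fun s s' hss' => Set.disjoint_left.2 fun ω h₁ h₂ => hss' (h₁.2.symm.trans h₂.2)
  · exact fun s => (pastIncrements_le hξ n _ (measurableSet_stayedInAt_pastIncrements n _)).inter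
      (hξ n (measurableSet_singleton s))

lemma toReal_measure_stayedInAt_succ [IsFiniteMeasure P] (hξ : ∀ n, Measurable (ξ n))
    (hindep : iIndepFun ξ P) (hlaw : ∀ n, P.map (ξ n) = lazyStep γ) (hγ : γ ∈ Set.Icc 0 1)
    (n : ℕ) {y : ℤ} (hy : y ∈ S) :
    (P (stayedInAt ξ z S (n + 1) y)).toReal
      = lazyAvg γ (fun x => (P (stayedInAt ξ z S n x)).toReal) y := by
  have hγ₂ : 0 ≤ γ / 2 := by linarith [hγ.1]
  have hγ₁ : 0 ≤ 1 - γ := by linarith [hγ.2]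
  rw [measure_stayedInAt_succ hξ hindep hlaw n hy, lintegral_lazyStep, lazyAvg]
  simp only [sub_neg_eq_add, sub_zero]
  rw [ENNReal.toReal_add (by finiteness) (by finiteness), ENNReal.toReal_add (by finiteness)
    (by finiteness)]
  simp only [ENNReal.toReal_mul, ENNReal.toReal_ofReal hγ₂, ENNReal.toReal_ofReal hγ₁]

lemma measure_stayedIn_add_le (hξ : ∀ n, Measurable (ξ n)) (hindep : iIndepFun ξ P)
    (hlaw : ∀ n, P.map (ξ n) = lazyStep γ) {a b : ℤ} (n : ℕ) {K : ℕ} (hK : b - a ≤ K) :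
    P (stayedIn ξ z (Set.Ioo a b) (n + K))
      + P (stayedIn ξ z (Set.Ioo a b) n) * ENNReal.ofReal (γ / 2) ^ K
      ≤ P (stayedIn ξ z (Set.Ioo a b) n) := by
  set A := stayedIn ξ z (Set.Ioo a b) n
  set O : Set Ω := ⋂ k ∈ Ico n (n + K), ξ k ⁻¹' {1}
  have hO : MeasurableSet O :=
    .biInter (Finset.countable_toSet _) fun k _ => hξ k (measurableSet_singleton 1)
  have hAO : P (A ∩ O) = P A * ENNReal.ofReal (γ / 2) ^ K := by
    rw [measure_inter_iInter_preimage_eq_mul hξ hindep (measurableSet_stayedIn_pastIncrements n)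
      (fun k hk => (mem_Ico.1 hk).1)]
    simp [A, measure_preimage_eq_lazyStep hξ hlaw, lazyStep_singleton_one]
  have hsub : stayedIn ξ z (Set.Ioo a b) (n + K) ⊆ A \ O := fun ω hω =>
    ⟨stayedIn_anti (Nat.le_add_right n K) hω, stayedIn_add_subset hK hω⟩
  calc _ ≤ P (A \ O) + P (A ∩ O) := add_le_add (measure_mono hsub) hAO.ge
    _ = P A := by rw [add_comm, measure_inter_add_sdiff _ hO]

lemma tendsto_measure_stayedIn [IsFiniteMeasure P] (hξ : ∀ n, Measurable (ξ n))
    (hindep : iIndepFun ξ P) (hlaw : ∀ n, P.map (ξ n) = lazyStep γ) (hγ₀ : 0 < γ) (hγ₂ : γ ≤ 2)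
    {a b : ℤ} (hab : a < b) :
    Tendsto (fun n => (P (stayedIn ξ z (Set.Ioo a b) n)).toReal) atTop (𝓝 0) := by
  set K := (b - a).toNat
  have hK : b - a ≤ K := Int.self_le_toNat _
  have hq₀ : 0 < γ / 2 := by positivity
  have hq₁ : (γ / 2) ^ K ≤ 1 := pow_le_one₀ hq₀.le (by linarith)
  have hq₂ : 0 < (γ / 2) ^ K := pow_pos hq₀ K
  refine tendsto_zero_of_antitone_of_le_mul (K := K) (ρ := 1 - (γ / 2) ^ K)
    (fun m n hmn => ENNReal.toReal_mono (measure_ne_top _ _) (measure_mono (stayedIn_anti hmn)))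
    (fun _ => ENNReal.toReal_nonneg) (by omega) (by linarith) (by linarith) fun n => ?_
  have hdecay := ENNReal.toReal_mono (measure_ne_top _ _)
    (measure_stayedIn_add_le (z := z) hξ hindep hlaw n hK)
  rw [ENNReal.toReal_add (measure_ne_top _ _) (by finiteness), ENNReal.toReal_mul,
    ENNReal.toReal_pow, ENNReal.toReal_ofReal hq₀.le] at hdecay
  linarith

end KilledWalk

section LocalTime

variable {Ω : Type} [MeasurableSpace Ω] {P : Measure Ω} {ξ : ℕ → Ω → ℤ} {γ : ℝ} {a b z : ℤ}

lemma tendsto_sum_measure_stayedInAt_mul_greenFn [IsFiniteMeasure P]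
    (hξ : ∀ n, Measurable (ξ n)) (hindep : iIndepFun ξ P) (hlaw : ∀ n, P.map (ξ n) = lazyStep γ)
    (hγ₀ : 0 < γ) (hγ₂ : γ ≤ 2) (hz : z ∈ Set.Icc a b) (hab : a < b) (z' : ℤ) :
    Tendsto (fun N => ∑ x ∈ Icc a b,
      (P (stayedInAt ξ z' (Set.Ioo a b) N x)).toReal * greenFn γ a b z x) atTop (𝓝 0) := by
  set C := 2 / γ * (b - a : ℝ)
  have hC : 0 ≤ C := mul_nonneg (by positivity) (sub_nonneg.2 (by exact_mod_cast hab.le))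
  have hsurvival := tendsto_measure_stayedIn (z := z') hξ hindep hlaw hγ₀ hγ₂ hab
  refine squeeze_zero (fun N => sum_nonneg fun x hx =>
      mul_nonneg ENNReal.toReal_nonneg (greenFn_nonneg hγ₀ hz (mem_Icc.1 hx)))
    (fun N => ?_) (by simpa using hsurvival.mul_const C)
  calc ∑ x ∈ Icc a b, (P (stayedInAt ξ z' (Set.Ioo a b) N x)).toReal * greenFn γ a b z x
      ≤ ∑ x ∈ Icc a b, (P (stayedInAt ξ z' (Set.Ioo a b) N x)).toReal * C :=
        sum_le_sum fun x hx =>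
          mul_le_mul_of_nonneg_left (greenFn_le hγ₀ hz (mem_Icc.1 hx)) ENNReal.toReal_nonneg
    _ = (∑ x ∈ Icc a b, P (stayedInAt ξ z' (Set.Ioo a b) N x)).toReal * C := by
        rw [ENNReal.toReal_sum fun _ _ => measure_ne_top _ _, sum_mul]
    _ ≤ (P (stayedIn ξ z' (Set.Ioo a b) N)).toReal * C := by
        gcongr
        · exact measure_ne_top _ _
        · exact sum_measure_stayedInAt_le hξ N _

lemma lintegral_localTime_eq_greenFn [IsProbabilityMeasure P] (hξ : ∀ n, Measurable (ξ n))
    (hindep : iIndepFun ξ P) (hlaw : ∀ n, P.map (ξ n) = lazyStep γ) (hγ : γ ∈ Set.Ioc 0 1)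
    {z' : ℤ} (hz : z ∈ Set.Ioo a b) (hz' : z' ∈ Set.Ioo a b) :
    ∫⁻ ω, localTime ξ z' z (exitTime ξ z' (Set.Ioo a b)) ω ∂P
      = ENNReal.ofReal (greenFn γ a b z z') := by
  set f : ℕ → ℤ → ℝ := fun n x => (P (stayedInAt ξ z' (Set.Ioo a b) n x)).toReal
  have hf₀ : ∀ x, f 0 x = if x = z' then 1 else 0 := fun x => by
    simp only [f, stayedInAt_zero hz']
    split_ifs <;> simp
  have hf : ∀ n, ∀ x ∉ Set.Ioo a b, f n x = 0 := fun n x hx => by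
    simp [f, stayedInAt_eq_empty hx]
  have hpartial := sum_range_eq_greenFn_sub hγ.1.ne' hz (Set.Ioo_subset_Icc_self hz') hf₀ hf
    fun n y hy => toReal_measure_stayedInAt_succ hξ hindep hlaw (Set.Ioc_subset_Icc_self hγ) n hy
  have hmass := tendsto_sum_measure_stayedInAt_mul_greenFn hξ hindep hlaw hγ.1 (by linarith [hγ.2])
    (Set.Ioo_subset_Icc_self hz) (hz.1.trans hz.2) z'
  have hofReal : ∀ N, ∑ n ∈ range N, P (stayedInAt ξ z' (Set.Ioo a b) n z)
      = ENNReal.ofReal (∑ n ∈ range N, f n z) := fun N => by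
    rw [ENNReal.ofReal_sum_of_nonneg fun n _ => ENNReal.toReal_nonneg]
    simp [ENNReal.ofReal_toReal]
  rw [lintegral_localTime_eq_tsum hξ]
  refine tendsto_nhds_unique (ENNReal.tendsto_nat_tsum _) ?_
  simp only [hofReal, hpartial]
  exact ENNReal.tendsto_ofReal (by simpa using tendsto_const_nhds.sub hmass)

end LocalTime

/-- for the lazy walk with parameter `γ` started at
`z' ∈ I = [z₀-d, z₀+d] ⊂ Ĩ = (z₀-h, z₀+h)` with `20(d+1) < h`, for any `z ∈ I`:
`E_{z'}[L^z_{T_Ĩ}] = γ⁻¹ h (1 + φ(z',z))` with `|φ(z',z)| ≤ c d / h`, `c = c(γ)`. -/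
theorem expected_local_time_asymptotics (γ : ℝ) (hγ : γ ∈ Set.Ioc (0 : ℝ) 1) :
    ∃ c > (0 : ℝ), ∀ (Ω : Type) [MeasurableSpace Ω] (P : Measure Ω)
      [IsProbabilityMeasure P] (ξ : ℕ → Ω → ℤ),
      (∀ n, Measurable (ξ n)) →
      iIndepFun ξ P →
      (∀ n, P.map (ξ n) = lazyStep γ) →
      ∀ (z₀ d h z z' : ℤ), 0 < d → 20 * (d + 1) < h →
        z ∈ Set.Icc (z₀ - d) (z₀ + d) → z' ∈ Set.Icc (z₀ - d) (z₀ + d) →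
        ∃ φ : ℝ, |φ| ≤ c * (d : ℝ) / (h : ℝ) ∧
          (∫⁻ ω, localTime ξ z' z (exitTime ξ z' (Set.Ioo (z₀ - h) (z₀ + h))) ω ∂P)
            = ENNReal.ofReal (γ⁻¹ * (h : ℝ) * (1 + φ)) := by
  refine ⟨3, by norm_num, fun Ω _ P _ ξ hξ hindep hlaw z₀ d h z z' _ hdh hz hz' => ?_⟩
  have hdh' : d < h := by omega
  have hI : Set.Icc (z₀ - d) (z₀ + d) ⊆ Set.Ioo (z₀ - h) (z₀ + h) :=
    Set.Icc_subset_Ioo (by omega) (by omega)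
  obtain ⟨φ, hφ, hgreen⟩ := exists_greenFn_eq_mul_one_add hγ.1.ne' hdh' hz hz'
  exact ⟨φ, hφ, by rw [lintegral_localTime_eq_greenFn hξ hindep hlaw hγ (hI hz) (hI hz'), hgreen]⟩
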